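/- arXiv:1906.10609 — 9 statements merged into one kernel-verified Lean document; each statement's English description precedes it below -/
import Mathlib

section
/- Let H be a Hilbert space, let M and N be closed subspaces of H with M ∩ N = {0}, and define c₀(M,N) = sup{ |⟨x,y⟩| : x ∈ M, y ∈ N, ‖x‖ ≤ 1, ‖y‖ ≤ 1 }. If c₀(M,N) < 1 then M + N is closed. -/
/-!
After rescaling, the definition of `c₀` reads `|⟪x, y⟫| ≤ c₀ ‖x‖ ‖y‖` for `x ∈ M`, `y ∈ N`.
Together with `2 ‖x‖ ‖y‖ ≤ ‖x‖² + ‖y‖²` this gives `(1 - c₀) (‖x‖² + ‖y‖²) ≤ ‖x + y‖²`. When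
`c₀ < 1` the addition map `M × N → M ⊔ N` is therefore bounded below, hence antilipschitz, and
its range `M ⊔ N` is closed because `M × N` is complete.
-/

/-- The cosine of the Dixmier angle between two closed subspaces. -/
noncomputable def dixmierC0 {H : Type*} [NormedAddCommGroup H] [InnerProductSpace ℂ H]
    (M N : Submodule ℂ H) : ℝ :=
  sSup {r : ℝ | ∃ x ∈ M, ∃ y ∈ N, ‖x‖ ≤ 1 ∧ ‖y‖ ≤ 1 ∧ r = ‖(inner ℂ x y : ℂ)‖}

open scoped NNReal

theorem Submodule.isClosed_sup_of_max_norm_le {𝕜 E : Type*} [NontriviallyNormedField 𝕜]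
    [NormedAddCommGroup E] [NormedSpace 𝕜 E] [CompleteSpace E] {M N : Submodule 𝕜 E}
    (hM : IsClosed (M : Set E)) (hN : IsClosed (N : Set E)) (K : ℝ≥0)
    (h : ∀ x ∈ M, ∀ y ∈ N, max ‖x‖ ‖y‖ ≤ K * ‖x + y‖) :
    IsClosed ((M ⊔ N : Submodule 𝕜 E) : Set E) := by
  have : CompleteSpace M := hM.completeSpace_coe
  have : CompleteSpace N := hN.completeSpace_coe
  let f : M × N →L[𝕜] E := M.subtypeL.coprod N.subtypeL
  have hrange : f.range = M ⊔ N := by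
    rw [ContinuousLinearMap.range_coprod]
    simp
  have hf : AntilipschitzWith K f :=
    f.antilipschitz_of_bound fun ⟨x, y⟩ => h x x.2 y y.2
  rw [← hrange, LinearMap.coe_range]
  exact hf.isClosed_range f.uniformContinuous

section InnerProductSpace

variable {𝕜 E : Type*} [RCLike 𝕜] [NormedAddCommGroup E] [InnerProductSpace 𝕜 E]

theorem one_sub_mul_sq_add_sq_le_norm_add_sq {c : ℝ} (hc : 0 ≤ c) {x y : E}
    (h : ‖(inner 𝕜 x y : 𝕜)‖ ≤ c * ‖x‖ * ‖y‖) :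
    (1 - c) * (‖x‖ ^ 2 + ‖y‖ ^ 2) ≤ ‖x + y‖ ^ 2 := by
  have hre : -(c * ‖x‖ * ‖y‖) ≤ RCLike.re (inner 𝕜 x y) :=
    (neg_le_neg h).trans <| neg_le_of_abs_le (RCLike.abs_re_le_norm _)
  rw [norm_add_sq (𝕜 := 𝕜)]
  nlinarith [mul_nonneg hc (sq_nonneg (‖x‖ - ‖y‖))]

theorem max_norm_le_of_norm_inner_le {c : ℝ} (hc₀ : 0 ≤ c) (hc₁ : c < 1) {x y : E}
    (h : ‖(inner 𝕜 x y : 𝕜)‖ ≤ c * ‖x‖ * ‖y‖) :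
    max ‖x‖ ‖y‖ ≤ (√(1 - c))⁻¹ * ‖x + y‖ := by
  have hpos : 0 < √(1 - c) := Real.sqrt_pos.2 (sub_pos.2 hc₁)
  rw [← div_eq_inv_mul, le_div_iff₀ hpos, ← sq_le_sq₀ (by positivity) (norm_nonneg _), mul_pow,
    Real.sq_sqrt (sub_pos.2 hc₁).le]
  have hmax : max ‖x‖ ‖y‖ ^ 2 ≤ ‖x‖ ^ 2 + ‖y‖ ^ 2 := by
    rcases max_cases ‖x‖ ‖y‖ with ⟨hm, -⟩ | ⟨hm, -⟩ <;> rw [hm] <;> nlinarith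
  calc max ‖x‖ ‖y‖ ^ 2 * (1 - c) = (1 - c) * max ‖x‖ ‖y‖ ^ 2 := mul_comm _ _
    _ ≤ (1 - c) * (‖x‖ ^ 2 + ‖y‖ ^ 2) := mul_le_mul_of_nonneg_left hmax (sub_pos.2 hc₁).le
    _ ≤ ‖x + y‖ ^ 2 := one_sub_mul_sq_add_sq_le_norm_add_sq hc₀ h

end InnerProductSpace

section dixmierC0

variable {H : Type*} [NormedAddCommGroup H] [InnerProductSpace ℂ H] (M N : Submodule ℂ H)

theorem bddAbove_dixmierC0_set :
    BddAbove {r : ℝ | ∃ x ∈ M, ∃ y ∈ N, ‖x‖ ≤ 1 ∧ ‖y‖ ≤ 1 ∧ r = ‖(inner ℂ x y : ℂ)‖} := by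
  refine ⟨1, ?_⟩
  rintro r ⟨x, -, y, -, hx, hy, rfl⟩
  calc ‖(inner ℂ x y : ℂ)‖ ≤ ‖x‖ * ‖y‖ := norm_inner_le_norm x y
    _ ≤ 1 := mul_le_one₀ hx (norm_nonneg y) hy

theorem dixmierC0_nonneg : 0 ≤ dixmierC0 M N :=
  le_csSup (bddAbove_dixmierC0_set M N) ⟨0, M.zero_mem, 0, N.zero_mem, by simp, by simp, by simp⟩

theorem norm_inner_le_dixmierC0_mul {x y : H} (hx : x ∈ M) (hy : y ∈ N) :
    ‖(inner ℂ x y : ℂ)‖ ≤ dixmierC0 M N * ‖x‖ * ‖y‖ := by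
  rcases eq_or_ne x 0 with rfl | hx0
  · simp
  rcases eq_or_ne y 0 with rfl | hy0
  · simp
  have hunit := le_csSup (bddAbove_dixmierC0_set M N)
    ⟨(‖x‖⁻¹ : ℂ) • x, M.smul_mem _ hx, (‖y‖⁻¹ : ℂ) • y, N.smul_mem _ hy,
      (norm_smul_inv_norm hx0).le, (norm_smul_inv_norm hy0).le, rfl⟩
  simp only [inner_smul_left, inner_smul_right, norm_mul, Complex.norm_conj, norm_inv,
    Complex.norm_real, norm_norm] at hunit
  rw [← mul_assoc, ← mul_inv, inv_mul_le_iff₀ (by positivity)] at hunit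
  exact hunit.trans_eq (by rw [dixmierC0]; ring)

end dixmierC0

theorem stmt_2_general {H : Type*} [NormedAddCommGroup H] [InnerProductSpace ℂ H] [CompleteSpace H]
    (M N : Submodule ℂ H) (hM : IsClosed (M : Set H)) (hN : IsClosed (N : Set H))
    (hc : dixmierC0 M N < 1) :
    IsClosed ((M ⊔ N : Submodule ℂ H) : Set H) :=
  Submodule.isClosed_sup_of_max_norm_le hM hN
    ⟨_, inv_nonneg.2 (Real.sqrt_nonneg (1 - dixmierC0 M N))⟩ fun _ hx _ hy =>
    max_norm_le_of_norm_inner_le (dixmierC0_nonneg M N) hc (norm_inner_le_dixmierC0_mul M N hx hy)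

/-- Lemma L07, one direction: if `M ∩ N = 0` and the Dixmier angle between `M`
and `N` is positive (`c₀(M,N) < 1`), then `M + N` is closed. -/
theorem stmt_2 {H : Type*} [NormedAddCommGroup H] [InnerProductSpace ℂ H] [CompleteSpace H]
    (M N : Submodule ℂ H) (hM : IsClosed (M : Set H)) (hN : IsClosed (N : Set H))
    (hMN : M ⊓ N = ⊥) (hc : dixmierC0 M N < 1) :
    IsClosed ((M ⊔ N : Submodule ℂ H) : Set H) :=
  stmt_2_general M N hM hN hc
end

section
/- Let H be a Hilbert space, let M and N be closed subspaces of H with M ∩ N = {0}. If M + N is closed, then c₀(M,N) = sup{ |⟨x,y⟩| : x ∈ M, y ∈ N, ‖x‖ ≤ 1, ‖y‖ ≤ 1 } < 1, i.e. the Dixmier angle between M and N is positive. -/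
open scoped InnerProductSpace

namespace Submodule

variable {𝕜 E : Type*} [NontriviallyNormedField 𝕜] [NormedAddCommGroup E] [NormedSpace 𝕜 E]
  {M N : Submodule 𝕜 E}

theorem injective_subtypeL_coprod (hMN : M ⊓ N = ⊥) :
    Function.Injective (M.subtypeL.coprod N.subtypeL) := by
  rw [← ContinuousLinearMap.coe_coe, ← LinearMap.ker_eq_bot, ContinuousLinearMap.coe_coprod,
    LinearMap.ker_coprod_of_disjoint_range]
  · simp
  · simpa [disjoint_iff] using hMN

theorem range_subtypeL_coprod :
    Set.range (M.subtypeL.coprod N.subtypeL) = ((M ⊔ N : Submodule 𝕜 E) : Set E) := by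
  rw [← ContinuousLinearMap.coe_coe, ← LinearMap.coe_range, ContinuousLinearMap.coe_coprod,
    LinearMap.range_coprod]
  simp

theorem exists_pos_mul_norm_le_norm_sub_of_isClosed_sup [CompleteSpace E]
    (hM : IsClosed (M : Set E)) (hN : IsClosed (N : Set E)) (hMN : M ⊓ N = ⊥)
    (hsum : IsClosed ((M ⊔ N : Submodule 𝕜 E) : Set E)) :
    ∃ c ∈ Set.Ioc (0 : ℝ) 1, ∀ x ∈ M, ∀ y ∈ N, c * ‖y‖ ≤ ‖y - x‖ := by
  have : CompleteSpace M := hM.completeSpace_coe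
  have : CompleteSpace N := hN.completeSpace_coe
  obtain ⟨K, hK⟩ := ContinuousLinearMap.antilipschitz_of_injective_of_isClosed_range (𝕜 := 𝕜) _
    (injective_subtypeL_coprod hMN) (by rwa [range_subtypeL_coprod])
  refine ⟨((K : ℝ) + 1)⁻¹, ⟨by positivity, inv_le_one_of_one_le₀ (by simp)⟩, fun x hx y hy ↦ ?_⟩
  have hy_le : ‖y‖ ≤ K * ‖y - x‖ := by
    have := hK.le_mul_norm (map_zero _) (⟨-x, M.neg_mem hx⟩, ⟨y, hy⟩)
    simp only [Prod.norm_def, norm_neg, coe_norm, ContinuousLinearMap.coprod_apply,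
      subtypeL_apply, neg_add_eq_sub] at this
    exact (le_max_right _ _).trans this
  rw [inv_mul_le_iff₀ (by positivity)]
  nlinarith [norm_nonneg (y - x)]

end Submodule

section InnerProductSpace

variable {𝕜 E : Type*} [RCLike 𝕜] [SeminormedAddCommGroup E] [InnerProductSpace 𝕜 E]

theorem norm_sub_inner_smul_sq_add_norm_inner_sq_le {x : E} (hx : ‖x‖ ≤ 1) (y : E) :
    ‖y - ⟪x, y⟫_𝕜 • x‖ ^ 2 + ‖⟪x, y⟫_𝕜‖ ^ 2 ≤ ‖y‖ ^ 2 := by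
  have hre : RCLike.re ⟪y, ⟪x, y⟫_𝕜 • x⟫_𝕜 = ‖⟪x, y⟫_𝕜‖ ^ 2 := by
    rw [inner_smul_right, ← inner_conj_symm x y, RCLike.conj_mul, RCLike.norm_conj]
    norm_cast
  rw [@norm_sub_sq 𝕜, hre, norm_smul]
  have : ‖x‖ ^ 2 ≤ 1 := by nlinarith [norm_nonneg x]
  nlinarith [sq_nonneg ‖⟪x, y⟫_𝕜‖]

theorem norm_inner_le_sqrt_one_sub_sq {M N : Submodule 𝕜 E} {c : ℝ} (hc0 : 0 ≤ c) (hc1 : c ≤ 1)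
    (h : ∀ x ∈ M, ∀ y ∈ N, c * ‖y‖ ≤ ‖y - x‖) {x y : E} (hx : x ∈ M) (hy : y ∈ N)
    (hx1 : ‖x‖ ≤ 1) (hy1 : ‖y‖ ≤ 1) : ‖⟪x, y⟫_𝕜‖ ≤ √(1 - c ^ 2) := by
  apply Real.le_sqrt_of_sq_le
  have hdist := h _ (M.smul_mem ⟪x, y⟫_𝕜 hx) y hy
  have hsq : (c * ‖y‖) ^ 2 ≤ ‖y - ⟪x, y⟫_𝕜 • x‖ ^ 2 := by gcongr
  have hpyth := norm_sub_inner_smul_sq_add_norm_inner_sq_le (𝕜 := 𝕜) hx1 y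
  have hscale : (1 - c ^ 2) * ‖y‖ ^ 2 ≤ 1 - c ^ 2 := by
    apply mul_le_of_le_one_right (by nlinarith)
    nlinarith [norm_nonneg y]
  nlinarith

end InnerProductSpace

theorem dixmierC0_le {H : Type*} [NormedAddCommGroup H] [InnerProductSpace ℂ H]
    {M N : Submodule ℂ H} {b : ℝ} (hb : 0 ≤ b)
    (h : ∀ x ∈ M, ∀ y ∈ N, ‖x‖ ≤ 1 → ‖y‖ ≤ 1 → ‖⟪x, y⟫_ℂ‖ ≤ b) : dixmierC0 M N ≤ b := by
  refine Real.sSup_le ?_ hb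
  rintro r ⟨x, hx, y, hy, hx1, hy1, rfl⟩
  exact h x hx y hy hx1 hy1

/-- Lemma L07, converse direction: if `M ∩ N = 0` and `M + N` is closed, then the
Dixmier angle between `M` and `N` is positive, i.e. `c₀(M,N) < 1`. -/
theorem stmt_3 {H : Type*} [NormedAddCommGroup H] [InnerProductSpace ℂ H] [CompleteSpace H]
    (M N : Submodule ℂ H) (hM : IsClosed (M : Set H)) (hN : IsClosed (N : Set H))
    (hMN : M ⊓ N = ⊥) (hsum : IsClosed ((M ⊔ N : Submodule ℂ H) : Set H)) :
    dixmierC0 M N < 1 := by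
  obtain ⟨c, ⟨hc0, hc1⟩, hc⟩ :=
    Submodule.exists_pos_mul_norm_le_norm_sub_of_isClosed_sup hM hN hMN hsum
  calc dixmierC0 M N ≤ √(1 - c ^ 2) := dixmierC0_le (Real.sqrt_nonneg _)
        fun x hx y hy ↦ norm_inner_le_sqrt_one_sub_sq hc0.le hc1 hc hx hy
    _ < 1 := by rw [Real.sqrt_lt' one_pos]; nlinarith
end

section
/- Let H be a Hilbert space and F, D bounded operators on H with Im F, Im D and Im(D∘F) closed. Then the kernel of D∘F is isomorphic (as a Hilbert space, i.e. there is a bounded linear isomorphism) to a closed subspace of ker D ⊕ ker F; more precisely, ker(D∘F) = ker F ⊕' W (internal direct sum with a closed subspace W) where W is isomorphic to ker D ∩ Im F. -/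
/-!
Take `W = (ker F)ᗮ ⊓ F⁻¹(ker D)`, which is `(ker F)ᗮ ⊓ ker (D ∘ F)`. Since `ker F ≤ ker (D ∘ F)`,
the orthogonal decomposition along `ker F` splits `ker (D ∘ F)` as `ker F ⊕ W`. The operator `F`
is injective on `(ker F)ᗮ` and maps `W` onto `range F ⊓ ker D`, which is closed because `range F`
is; by the open mapping theorem `F` restricts to an isomorphism of Banach spaces between them.
-/

open Submodule LinearMap

section

variable {𝕜 E G : Type*} [RCLike 𝕜] [NormedAddCommGroup E] [InnerProductSpace 𝕜 E]
  [NormedAddCommGroup G] [NormedSpace 𝕜 G]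

theorem Submodule.map_orthogonal_ker_inf_comap (f : E →ₗ[𝕜] G) [(ker f).HasOrthogonalProjection]
    (S : Submodule 𝕜 G) : map f ((ker f)ᗮ ⊓ comap f S) = range f ⊓ S := by
  conv_rhs => rw [← map_comap_eq, ← sup_orthogonal_inf_of_hasOrthogonalProjection (ker_le_comap f)]
  rw [map_sup, le_ker_iff_map.mp le_rfl, bot_sup_eq]

theorem ContinuousLinearMap.isClosed_orthogonal_ker_inf_comap (f : E →L[𝕜] G) {S : Submodule 𝕜 G}
    (hS : IsClosed (S : Set G)) :
    IsClosed (((ker (f : E →ₗ[𝕜] G))ᗮ ⊓ comap (f : E →ₗ[𝕜] G) S : Submodule 𝕜 E) : Set E) :=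
  (isClosed_orthogonal _).inter (hS.preimage f.continuous)

noncomputable def ContinuousLinearMap.orthogonalKerInfComapEquiv [CompleteSpace E] [CompleteSpace G]
    (f : E →L[𝕜] G) {S : Submodule 𝕜 G} (hS : IsClosed (S : Set G))
    (hf : IsClosed (range (f : E →ₗ[𝕜] G) : Set G)) :
    ((ker (f : E →ₗ[𝕜] G))ᗮ ⊓ comap (f : E →ₗ[𝕜] G) S : Submodule 𝕜 E) ≃L[𝕜]
      (S ⊓ range (f : E →ₗ[𝕜] G) : Submodule 𝕜 G) :=
  let W := (ker (f : E →ₗ[𝕜] G))ᗮ ⊓ comap (f : E →ₗ[𝕜] G) S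
  have : CompleteSpace W := (f.isClosed_orthogonal_ker_inf_comap hS).completeSpace_coe
  have hrange : range ((f : E →ₗ[𝕜] G).comp W.subtype) = S ⊓ range (f : E →ₗ[𝕜] G) := by
    rw [range_comp, range_subtype, map_orthogonal_ker_inf_comap, inf_comm]
  have hinj : Function.Injective (f.comp W.subtypeL) := fun x y hxy =>
    Subtype.ext <| disjoint_ker_iff_injOn.mp (orthogonal_disjoint _).symm x.2.1 y.2.1 hxy
  have hclosed : IsClosed (Set.range ((f : E →ₗ[𝕜] G).comp W.subtype)) := by
    rw [← coe_range, hrange]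
    exact hS.inter hf
  (f.comp W.subtypeL).equivRange hinj hclosed |>.trans (ContinuousLinearEquiv.ofEq _ _ hrange)

end

theorem stmt_5_general {H : Type*} [NormedAddCommGroup H] [InnerProductSpace ℂ H] [CompleteSpace H]
    (F D : H →L[ℂ] H)
    (hF : IsClosed ((LinearMap.range (F : H →ₗ[ℂ] H) : Submodule ℂ H) : Set H)) :
    ∃ W : Submodule ℂ H, IsClosed (W : Set H) ∧
      Disjoint (LinearMap.ker (F : H →ₗ[ℂ] H)) W ∧
      LinearMap.ker (F : H →ₗ[ℂ] H) ⊔ W = LinearMap.ker (D.comp F : H →ₗ[ℂ] H) ∧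
      Nonempty (W ≃L[ℂ] (LinearMap.ker (D : H →ₗ[ℂ] H) ⊓ LinearMap.range (F : H →ₗ[ℂ] H) : Submodule ℂ H)) := by
  have hDker : IsClosed (ker (D : H →ₗ[ℂ] H) : Set H) := D.isClosed_ker
  exact ⟨_, F.isClosed_orthogonal_ker_inf_comap hDker,
    (orthogonal_disjoint _).mono_right inf_le_left,
    sup_orthogonal_inf_of_hasOrthogonalProjection (ker_le_comap _),
    ⟨F.orthogonalKerInfComapEquiv hDker hF⟩⟩

/-- Kernel half of Lemma L06 (Hilbert space case): if `Im F`, `Im D`, `Im (D∘F)`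
are closed then `ker (D∘F) = ker F ⊕ W` (internal direct sum with a closed
subspace `W`) where `W` is isomorphic, via a continuous linear equivalence, to
`ker D ∩ Im F`. In particular `ker (D∘F)` is isomorphic to a closed subspace of
`ker D ⊕ ker F`. -/
theorem stmt_5 {H : Type*} [NormedAddCommGroup H] [InnerProductSpace ℂ H] [CompleteSpace H]
    (F D : H →L[ℂ] H)
    (hF : IsClosed ((LinearMap.range (F : H →ₗ[ℂ] H) : Submodule ℂ H) : Set H))
    (hD : IsClosed ((LinearMap.range (D : H →ₗ[ℂ] H) : Submodule ℂ H) : Set H))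
    (hDF : IsClosed ((LinearMap.range (D.comp F : H →ₗ[ℂ] H) : Submodule ℂ H) : Set H)) :
    ∃ W : Submodule ℂ H, IsClosed (W : Set H) ∧
      Disjoint (LinearMap.ker (F : H →ₗ[ℂ] H)) W ∧
      LinearMap.ker (F : H →ₗ[ℂ] H) ⊔ W = LinearMap.ker (D.comp F : H →ₗ[ℂ] H) ∧
      Nonempty (W ≃L[ℂ] (LinearMap.ker (D : H →ₗ[ℂ] H) ⊓ LinearMap.range (F : H →ₗ[ℂ] H) : Submodule ℂ H)) :=
  stmt_5_general F D hF
end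

section
/- Let H be a Hilbert space and F, D bounded operators on H with Im F, Im D and Im(D∘F) closed. Then (Im(D∘F))^⊥ embeds as a closed subspace, via a bounded linear isomorphism onto its image, into (Im F)^⊥ ⊕ (Im D)^⊥. In particular, if H is finite-dimensional or the complements are finite-dimensional, dim (Im DF)^⊥ ≤ dim (Im F)^⊥ + dim (Im D)^⊥. -/
/-!
The embedding sends `x ∈ (Im DF)ᗮ` to `(D† x, P x)`, where `P` is the orthogonal projection onto
`(Im D)ᗮ`; the first component lies in `(Im F)ᗮ` because `⟪F y, D† x⟫ = ⟪D F y, x⟫ = 0`.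
Since `Im D` is closed, the open mapping theorem makes `D†` bounded below on `Im D`. As `Im D = ker P`
and `(Im D)ᗮ = ker D†`, splitting `x = (x - P x) + P x` gives `‖x‖ ≤ C ‖D† x‖ + ‖P x‖` for all `x`,
so the map is antilipschitz, hence injective with closed range.
-/

open ContinuousLinearMap Submodule NNReal
open scoped InnerProduct InnerProductSpace

namespace ContinuousLinearMap

variable {𝕜 E M N : Type*} [RCLike 𝕜]
  [NormedAddCommGroup E] [InnerProductSpace 𝕜 E]
  [NormedAddCommGroup M] [InnerProductSpace 𝕜 M] [CompleteSpace M]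
  [NormedAddCommGroup N] [InnerProductSpace 𝕜 N] [CompleteSpace N]

theorem exists_norm_le_mul_norm_adjoint_of_isClosed_range (D : M →L[𝕜] N)
    (hD : IsClosed (D.range : Set N)) : ∃ C : ℝ≥0, ∀ v ∈ D.range, ‖v‖ ≤ C * ‖(D†) v‖ := by
  have : CompleteSpace D.range := hD.completeSpace_coe
  obtain ⟨C, hC0, hC⟩ := D.rangeRestrict.exists_preimage_norm_le fun ⟨_, y, hy⟩ => ⟨y, Subtype.ext hy⟩
  refine ⟨⟨C, hC0.le⟩, fun v hv => ?_⟩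
  obtain ⟨y, hy, hyv⟩ := hC ⟨v, hv⟩
  replace hy : D y = v := congrArg Subtype.val hy
  rcases eq_or_ne v 0 with rfl | hv0
  · simp
  have hsq : ‖v‖ * ‖v‖ ≤ C * ‖(D†) v‖ * ‖v‖ := calc
    ‖v‖ * ‖v‖ = ‖⟪y, (D†) v⟫_𝕜‖ := by
      rw [adjoint_inner_right, hy, ← inner_self_re_eq_norm, inner_self_eq_norm_mul_norm]
    _ ≤ ‖y‖ * ‖(D†) v‖ := norm_inner_le_norm _ _
    _ ≤ C * ‖v‖ * ‖(D†) v‖ := by gcongr; exact hyv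
    _ = C * ‖(D†) v‖ * ‖v‖ := by ring
  exact le_of_mul_le_mul_right hsq (norm_pos_iff.2 hv0)

theorem antilipschitz_adjoint_prod_orthogonalProjectionOnto (D : M →L[𝕜] N)
    (hD : IsClosed (D.range : Set N)) :
    ∃ K, AntilipschitzWith K ((D†).prod D.rangeᗮ.orthogonalProjectionOnto) := by
  have : CompleteSpace D.range := hD.completeSpace_coe
  obtain ⟨C, hC⟩ := D.exists_norm_le_mul_norm_adjoint_of_isClosed_range hD
  refine ⟨C + 1, antilipschitz_of_bound _ fun x => ?_⟩
  set Φ := (D†).prod D.rangeᗮ.orthogonalProjectionOnto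
  have hker : (D†) (D.rangeᗮ.starProjection x) = 0 :=
    (D.orthogonal_range ▸ D.rangeᗮ.starProjection_apply_mem x : _ ∈ (D†).ker)
  have hrange : D.range.starProjection x = x - D.rangeᗮ.starProjection x := by
    rw [starProjection_orthogonal_val, sub_sub_cancel]
  calc ‖x‖ = ‖D.range.starProjection x + D.rangeᗮ.starProjection x‖ := by
        rw [starProjection_add_starProjection_orthogonal]
    _ ≤ C * ‖(D†) x‖ + ‖D.rangeᗮ.starProjection x‖ := by
        grw [norm_add_le, hC _ (D.range.starProjection_apply_mem x), hrange, map_sub, hker, sub_zero]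
    _ ≤ C * ‖Φ x‖ + ‖Φ x‖ := by
        gcongr
        exacts [_root_.norm_fst_le (Φ x), _root_.norm_snd_le (Φ x)]
    _ = ↑(C + 1) * ‖Φ x‖ := by push_cast; ring

theorem adjoint_apply_mem_orthogonal_range_of_mem_orthogonal_range_comp (F : E →L[𝕜] M)
    (D : M →L[𝕜] N) {x : N} (hx : x ∈ (D ∘L F).rangeᗮ) : (D†) x ∈ F.rangeᗮ := by
  rintro _ ⟨y, rfl⟩
  rw [coe_coe, adjoint_inner_right]
  exact hx _ ⟨y, rfl⟩

noncomputable def orthogonalRangeCompToProd (F : E →L[𝕜] M) (D : M →L[𝕜] N) :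
    (D ∘L F).rangeᗮ →L[𝕜] F.rangeᗮ × D.rangeᗮ :=
  (((D†) ∘L (D ∘L F).rangeᗮ.subtypeL).codRestrict _ fun x =>
      adjoint_apply_mem_orthogonal_range_of_mem_orthogonal_range_comp F D x.2).prod
    (D.rangeᗮ.orthogonalProjectionOnto ∘L (D ∘L F).rangeᗮ.subtypeL)

theorem antilipschitz_orthogonalRangeCompToProd (F : E →L[𝕜] M) (D : M →L[𝕜] N)
    (hD : IsClosed (D.range : Set N)) :
    ∃ K, AntilipschitzWith K (orthogonalRangeCompToProd F D) := by
  obtain ⟨K, hK⟩ := D.antilipschitz_adjoint_prod_orthogonalProjectionOnto hD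
  -- the distances in `(Im F)ᗮ × (Im D)ᗮ` are definitionally those of the ambient product
  exact ⟨K, fun x y => hK x y⟩

end ContinuousLinearMap

theorem stmt_6_general {H : Type*} [NormedAddCommGroup H] [InnerProductSpace ℂ H] [CompleteSpace H]
    (F D : H →L[ℂ] H)
    (hD : IsClosed ((LinearMap.range (D : H →ₗ[ℂ] H) : Submodule ℂ H) : Set H)) :
    (∃ T : ((LinearMap.range ((D.comp F : H →L[ℂ] H) : H →ₗ[ℂ] H))ᗮ : Submodule ℂ H) →L[ℂ]
        (((LinearMap.range (F : H →ₗ[ℂ] H))ᗮ : Submodule ℂ H) × ((LinearMap.range (D : H →ₗ[ℂ] H))ᗮ : Submodule ℂ H)),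
      Function.Injective T ∧ IsClosed (Set.range T)) ∧
    Module.rank ℂ ((LinearMap.range ((D.comp F : H →L[ℂ] H) : H →ₗ[ℂ] H))ᗮ : Submodule ℂ H) ≤
      Module.rank ℂ ((LinearMap.range (F : H →ₗ[ℂ] H))ᗮ : Submodule ℂ H) +
        Module.rank ℂ ((LinearMap.range (D : H →ₗ[ℂ] H))ᗮ : Submodule ℂ H) := by
  obtain ⟨K, hK⟩ := antilipschitz_orthogonalRangeCompToProd F D hD
  set T := orthogonalRangeCompToProd F D
  refine ⟨⟨T, hK.injective, hK.isClosed_range T.uniformContinuous⟩, ?_⟩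
  rw [← rank_prod']
  exact LinearMap.rank_le_of_injective (T : _ →ₗ[ℂ] _) hK.injective

/-- Cokernel half of Lemma L06 (Hilbert space case): if `Im F`, `Im D`,
`Im (D∘F)` are closed, then `(Im (D∘F))ᗮ` embeds, via a bounded linear map which
is injective with closed range, into `(Im F)ᗮ ⊕ (Im D)ᗮ`; in particular the
(cardinal) dimension inequality holds. -/
theorem stmt_6 {H : Type*} [NormedAddCommGroup H] [InnerProductSpace ℂ H] [CompleteSpace H]
    (F D : H →L[ℂ] H)
    (hF : IsClosed ((LinearMap.range (F : H →ₗ[ℂ] H) : Submodule ℂ H) : Set H))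
    (hD : IsClosed ((LinearMap.range (D : H →ₗ[ℂ] H) : Submodule ℂ H) : Set H))
    (hDF : IsClosed ((LinearMap.range ((D.comp F : H →L[ℂ] H) : H →ₗ[ℂ] H) : Submodule ℂ H) : Set H)) :
    (∃ T : ((LinearMap.range ((D.comp F : H →L[ℂ] H) : H →ₗ[ℂ] H))ᗮ : Submodule ℂ H) →L[ℂ]
        (((LinearMap.range (F : H →ₗ[ℂ] H))ᗮ : Submodule ℂ H) × ((LinearMap.range (D : H →ₗ[ℂ] H))ᗮ : Submodule ℂ H)),
      Function.Injective T ∧ IsClosed (Set.range T)) ∧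
    Module.rank ℂ ((LinearMap.range ((D.comp F : H →L[ℂ] H) : H →ₗ[ℂ] H))ᗮ : Submodule ℂ H) ≤
      Module.rank ℂ ((LinearMap.range (F : H →ₗ[ℂ] H))ᗮ : Submodule ℂ H) +
        Module.rank ℂ ((LinearMap.range (D : H →ₗ[ℂ] H))ᗮ : Submodule ℂ H) :=
  stmt_6_general F D hD
end

section
/- Let H be a Hilbert space and F, D bounded operators on H with Im F and Im D closed. Then Im(D∘F) is closed if and only if Im F + ker D is closed. -/
/-!
Since `Im D` is closed, it is a Banach space, and by the open mapping theorem `D : H → Im D` is a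
quotient map. Hence `D '' S` is closed exactly when its preimage `S + ker D` is closed. Applied to
`S = Im F`, whose image is `Im (D ∘ F)`, this is the criterion.
-/

open Topology

theorem ContinuousLinearMap.isClosed_map_iff_isClosed_sup_ker {𝕜 E F : Type*}
    [NontriviallyNormedField 𝕜] [NormedAddCommGroup E] [NormedSpace 𝕜 E] [CompleteSpace E]
    [NormedAddCommGroup F] [NormedSpace 𝕜 F] [CompleteSpace F] (f : E →L[𝕜] F)
    (hf : IsClosed ((LinearMap.range (f : E →ₗ[𝕜] F) : Submodule 𝕜 F) : Set F))
    (S : Submodule 𝕜 E) :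
    IsClosed (S.map (f : E →ₗ[𝕜] F) : Set F) ↔
      IsClosed ((S ⊔ LinearMap.ker (f : E →ₗ[𝕜] F) : Submodule 𝕜 E) : Set E) := by
  set R := LinearMap.range (f : E →ₗ[𝕜] F)
  have : CompleteSpace R := hf.completeSpace_coe
  set g : E →L[𝕜] R := f.codRestrict R (LinearMap.mem_range_self (f : E →ₗ[𝕜] F))
  have hg : IsQuotientMap g := g.isQuotientMap fun ⟨_, x, hx⟩ ↦ ⟨x, Subtype.ext hx⟩
  have hpreimage :
      g ⁻¹' (g '' S) = ((S ⊔ LinearMap.ker (f : E →ₗ[𝕜] F) : Submodule 𝕜 E) : Set E) := by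
    have := Submodule.comap_map_eq (g : E →ₗ[𝕜] R) S
    rw [ContinuousLinearMap.ker_codRestrict] at this
    exact congrArg SetLike.coe this
  have himage : (S.map (f : E →ₗ[𝕜] F) : Set F) = Subtype.val '' (g '' S) := by
    rw [Set.image_image]; rfl
  rw [himage, ← hpreimage, hg.isClosed_preimage]
  exact hf.isClosedEmbedding_subtypeVal.isClosed_iff_image_isClosed.symm

theorem stmt_7_general {H : Type*} [NormedAddCommGroup H] [InnerProductSpace ℂ H] [CompleteSpace H]
    (F D : H →L[ℂ] H)
    (hD : IsClosed ((LinearMap.range (D : H →ₗ[ℂ] H) : Submodule ℂ H) : Set H)) :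
    IsClosed ((LinearMap.range ((D.comp F : H →L[ℂ] H) : H →ₗ[ℂ] H) : Submodule ℂ H) : Set H) ↔
      IsClosed ((LinearMap.range (F : H →ₗ[ℂ] H) ⊔ LinearMap.ker (D : H →ₗ[ℂ] H) : Submodule ℂ H) : Set H) := by
  rw [ContinuousLinearMap.toLinearMap_comp, LinearMap.range_comp]
  exact D.isClosed_map_iff_isClosed_sup_ker hD _

/-- Closed-range composition criterion (Hilbert space case): if `Im F` and
`Im D` are closed, then `Im (D∘F)` is closed iff `Im F + ker D` is closed. -/
theorem stmt_7 {H : Type*} [NormedAddCommGroup H] [InnerProductSpace ℂ H] [CompleteSpace H]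
    (F D : H →L[ℂ] H)
    (hF : IsClosed ((LinearMap.range (F : H →ₗ[ℂ] H) : Submodule ℂ H) : Set H))
    (hD : IsClosed ((LinearMap.range (D : H →ₗ[ℂ] H) : Submodule ℂ H) : Set H)) :
    IsClosed ((LinearMap.range ((D.comp F : H →L[ℂ] H) : H →ₗ[ℂ] H) : Submodule ℂ H) : Set H) ↔
      IsClosed ((LinearMap.range (F : H →ₗ[ℂ] H) ⊔ LinearMap.ker (D : H →ₗ[ℂ] H) : Submodule ℂ H) : Set H) :=
  stmt_7_general F D hD
end

section
/- Let H be a Hilbert space and F a bounded operator on H with closed range. Let (xₙ) be a sequence in H such that the sequence (P xₙ) is bounded, where P is the orthogonal projection onto ker F. If (xₙ) has no weakly convergent subsequence, then (F xₙ) has no norm-convergent subsequence. -/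
/-!
Write `xₙ = P xₙ + qₙ` with `qₙ ∈ (ker F)ᗮ`. Since `F` has closed range, it is bounded below on
`(ker F)ᗮ`, so norm convergence of `F x_{φ n} = F q_{φ n}` forces `q_{φ n}` to converge in norm.
The bounded sequence `P x_{φ n}` has a weakly convergent subsequence (sequential Banach–Alaoglu on
the separable closed span of the sequence, via the Riesz representation), and along it
`x_{φ n} = P x_{φ n} + q_{φ n}` converges weakly.
-/

open Filter Topology

theorem ContinuousLinearMap.exists_antilipschitzWith_comp_orthogonal_ker
    {𝕜 E F : Type*} [RCLike 𝕜] [NormedAddCommGroup E] [InnerProductSpace 𝕜 E] [CompleteSpace E]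
    [NormedAddCommGroup F] [NormedSpace 𝕜 F] [CompleteSpace F] (T : E →L[𝕜] F)
    (hT : IsClosed (Set.range T)) :
    ∃ c, AntilipschitzWith c (T ∘L (LinearMap.ker (T : E →ₗ[𝕜] F))ᗮ.subtypeL) := by
  set N := LinearMap.ker (T : E →ₗ[𝕜] F)
  refine (T ∘L Nᗮ.subtypeL).antilipschitz_of_injective_of_isClosed_range ?_ ?_
  · refine (injective_iff_map_eq_zero _).mpr fun u hu => Subtype.ext ?_
    exact Submodule.disjoint_def.mp N.orthogonal_disjoint u hu u.2
  · convert hT using 1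
    refine (Set.range_comp_subset_range Nᗮ.subtypeL T).antisymm ?_
    rintro _ ⟨u, rfl⟩
    refine ⟨⟨u - N.starProjection u, N.sub_starProjection_mem_orthogonal u⟩, ?_⟩
    have hPu : T (N.starProjection u) = 0 := N.starProjection_apply_mem u
    simp [hPu]

theorem AntilipschitzWith.cauchySeq_of_cauchySeq_comp {α β : Type*} [PseudoEMetricSpace α]
    [PseudoEMetricSpace β] {K : NNReal} {f : α → β} (hf : AntilipschitzWith K f)
    (hfc : UniformContinuous f) {u : ℕ → α} (hu : CauchySeq (f ∘ u)) : CauchySeq u :=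
  (hf.isUniformInducing hfc).cauchy_map_iff.mp (by rwa [Filter.map_map])

theorem InnerProductSpace.exists_strictMono_tendsto_inner_of_norm_le
    {𝕜 E : Type*} [RCLike 𝕜] [NormedAddCommGroup E] [InnerProductSpace 𝕜 E] [CompleteSpace E]
    {y : ℕ → E} {C : ℝ} (hC : ∀ n, ‖y n‖ ≤ C) :
    ∃ φ : ℕ → ℕ, StrictMono φ ∧ ∃ l : E, ∀ v : E,
      Tendsto (fun n => inner 𝕜 v (y (φ n))) atTop (𝓝 (inner 𝕜 v l)) := by
  set K := (Submodule.span 𝕜 (Set.range y)).topologicalClosure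
  have hyK : ∀ n, y n ∈ K := fun n =>
    Submodule.le_topologicalClosure _ (Submodule.subset_span (Set.mem_range_self n))
  have : TopologicalSpace.SeparableSpace K := by
    refine TopologicalSpace.IsSeparable.separableSpace ?_
    rw [Submodule.topologicalClosure_coe]
    exact (Set.countable_range y).isSeparable.span.closure
  let z : ℕ → WeakDual 𝕜 K := fun n =>
    StrongDual.toWeakDual (InnerProductSpace.toDual 𝕜 K ⟨y n, hyK n⟩)
  obtain ⟨f, -, φ, hφ, hf⟩ := WeakDual.isSeqCompact_closedBall 𝕜 K 0 C (x := z) fun n => by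
    simpa [z] using hC n
  set l := (InnerProductSpace.toDual 𝕜 K).symm (WeakDual.toStrongDual f)
  refine ⟨φ, hφ, l, fun v => ?_⟩
  have hzv : Tendsto (fun n => z (φ n) (K.orthogonalProjectionOnto v)) atTop
      (𝓝 (f (K.orthogonalProjectionOnto v))) :=
    ((WeakDual.eval_continuous _).tendsto f).comp hf
  have hl : inner 𝕜 v (l : E) = starRingEnd 𝕜 (f (K.orthogonalProjectionOnto v)) := by
    rw [← Submodule.inner_orthogonalProjectionOnto_eq_of_mem_right, ← inner_conj_symm,
      InnerProductSpace.toDual_symm_apply, WeakDual.toStrongDual_apply]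
  rw [hl]
  simpa [z, Function.comp_def] using (RCLike.continuous_conj.tendsto _).comp hzv

/-- Lemma L02, Hilbert space case: let `F` have closed range, `P` the orthogonal
projection onto `ker F`, and `(xₙ)` a sequence with `(P xₙ)` bounded. If `(xₙ)`
has no weakly convergent subsequence, then `(F xₙ)` has no norm-convergent
subsequence. -/
theorem stmt_9 {H : Type*} [NormedAddCommGroup H] [InnerProductSpace ℂ H] [CompleteSpace H]
    (F : H →L[ℂ] H)
    (hF : IsClosed ((LinearMap.range (F : H →ₗ[ℂ] H) : Submodule ℂ H) : Set H))
    (x : ℕ → H) (P : H →L[ℂ] H)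
    (hP : ∀ v : H, P v ∈ LinearMap.ker (F : H →ₗ[ℂ] H) ∧ v - P v ∈ (LinearMap.ker (F : H →ₗ[ℂ] H))ᗮ)
    (hb : ∃ C : ℝ, ∀ n, ‖P (x n)‖ ≤ C)
    (hw : ¬ ∃ φ : ℕ → ℕ, StrictMono φ ∧ ∃ l : H, ∀ y : H,
        Filter.Tendsto (fun n => (inner ℂ y (x (φ n)) : ℂ)) Filter.atTop
          (nhds (inner ℂ y l))) :
    ¬ ∃ φ : ℕ → ℕ, StrictMono φ ∧ ∃ l : H,
        Filter.Tendsto (fun n => F (x (φ n))) Filter.atTop (nhds l) := by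
  rintro ⟨φ, hφ, l, hl⟩
  obtain ⟨C, hC⟩ := hb
  set T := F ∘L (LinearMap.ker (F : H →ₗ[ℂ] H))ᗮ.subtypeL
  obtain ⟨c, hc⟩ :=
    F.exists_antilipschitzWith_comp_orthogonal_ker (by rwa [LinearMap.coe_range] at hF)
  let q : ℕ → (LinearMap.ker (F : H →ₗ[ℂ] H))ᗮ := fun n => ⟨x (φ n) - P (x (φ n)), (hP _).2⟩
  have hTq : T ∘ q = fun n => F (x (φ n)) := by
    ext1 n
    have hFP : F (P (x (φ n))) = 0 := (hP _).1
    simp [T, q, hFP]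
  obtain ⟨q', hq'⟩ := cauchySeq_tendsto_of_complete
    (hc.cauchySeq_of_cauchySeq_comp T.uniformContinuous (hTq ▸ hl.cauchySeq))
  obtain ⟨ψ, hψ, p', hp'⟩ := InnerProductSpace.exists_strictMono_tendsto_inner_of_norm_le
    (𝕜 := ℂ) fun n => hC (φ n)
  refine hw ⟨φ ∘ ψ, hφ.comp hψ, q' + p', fun v => ?_⟩
  have hqv : Tendsto (fun n => inner ℂ v (q (ψ n) : H)) atTop (𝓝 (inner ℂ v (q' : H))) :=
    tendsto_const_nhds.inner ((continuous_subtype_val.tendsto q').comp (hq'.comp hψ.tendsto_atTop))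
  rw [inner_add_right]
  convert hqv.add (hp' v) using 2 with n
  simp [q]
end

section
/- Let H be a Hilbert space and F a bounded Fredholm operator on H with closed range. Then there exists ε > 0 such that for every bounded operator D with ‖D‖ < ε: ker(F + D) is isomorphic to a closed subspace of ker F, and (Im(F+D))^⊥ is isomorphic to a closed subspace of (Im F)^⊥. In particular dim ker(F+D) ≤ dim ker F and dim coker(F+D) ≤ dim coker F. -/
/-!
Since `Im F` is closed, the open mapping theorem gives `c > 0` such that every `y ∈ Im F` has a
preimage `x` with `c ‖x‖ ≤ ‖y‖`; on `(ker F)ᗮ` this means `c ‖x‖ ≤ ‖F x‖`. For `‖D‖ < c` this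
forces `ker (F + D) ∩ (ker F)ᗮ = 0` and `(Im (F + D))ᗮ ∩ Im F = 0`: for `z = F q` orthogonal to
`Im (F + D)` one gets `‖z‖² = -⟪D q, z⟫ ≤ ‖D‖ ‖q‖ ‖z‖`. Since `(Im F)ᗮᗮ = Im F`, the orthogonal
projections onto `ker F` and onto `(Im F)ᗮ` are therefore injective on `ker (F + D)` and on
`(Im (F + D))ᗮ` respectively, and their images are closed because the targets are finite
dimensional.
-/

open Submodule
open scoped InnerProductSpace

section

variable {𝕜 E G : Type*} [RCLike 𝕜] [NormedAddCommGroup E] [NormedAddCommGroup G]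

namespace Submodule

variable [InnerProductSpace 𝕜 E]

theorem norm_le_of_mem_orthogonal_of_sub_mem {K : Submodule 𝕜 E} {x y : E} (hx : x ∈ Kᗮ)
    (hxy : y - x ∈ K) : ‖x‖ ≤ ‖y‖ := by
  have hpyth := norm_add_sq_eq_norm_sq_add_norm_sq_of_inner_eq_zero (𝕜 := 𝕜) x (y - x)
    (K.inner_left_of_mem_orthogonal hxy hx)
  rw [add_sub_cancel] at hpyth
  nlinarith [norm_nonneg x, norm_nonneg y, mul_self_nonneg ‖y - x‖]

variable {K V : Submodule 𝕜 E} [K.HasOrthogonalProjection]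

theorem injective_orthogonalProjectionOnto_comp_subtypeL (h : V ⊓ Kᗮ = ⊥) :
    Function.Injective (K.orthogonalProjectionOnto ∘L V.subtypeL) := by
  refine (injective_iff_map_eq_zero _).mpr fun z hz => ?_
  have hzK : (z : E) ∈ Kᗮ := orthogonalProjectionOnto_eq_zero_iff.mp hz
  simpa using (Submodule.eq_bot_iff _).mp h z ⟨z.2, hzK⟩

theorem finrank_le_of_inf_orthogonal_eq_bot [FiniteDimensional 𝕜 K] (h : V ⊓ Kᗮ = ⊥) :
    Module.finrank 𝕜 V ≤ Module.finrank 𝕜 K :=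
  LinearMap.finrank_le_finrank_of_injective
    (f := (K.orthogonalProjectionOnto ∘L V.subtypeL : V →ₗ[𝕜] K))
    (injective_orthogonalProjectionOnto_comp_subtypeL h)

theorem exists_injective_isClosed_range_of_inf_orthogonal_eq_bot [FiniteDimensional 𝕜 K]
    (h : V ⊓ Kᗮ = ⊥) : ∃ T : V →L[𝕜] K, Function.Injective T ∧ IsClosed (Set.range T) :=
  ⟨_, injective_orthogonalProjectionOnto_comp_subtypeL h, by
    rw [← ContinuousLinearMap.coe_coe, ← LinearMap.coe_range]
    exact closed_of_finiteDimensional _⟩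

end Submodule

namespace ContinuousLinearMap

theorem exists_preimage_mul_norm_le_of_isClosed_range
    [NormedSpace 𝕜 E] [CompleteSpace E] [NormedSpace 𝕜 G] [CompleteSpace G] (f : E →L[𝕜] G)
    (hf : IsClosed (LinearMap.range (f : E →ₗ[𝕜] G) : Set G)) :
    ∃ c > (0 : ℝ), ∀ y ∈ LinearMap.range (f : E →ₗ[𝕜] G), ∃ x, f x = y ∧ c * ‖x‖ ≤ ‖y‖ := by
  have : CompleteSpace (LinearMap.range (f : E →ₗ[𝕜] G)) := hf.completeSpace_coe
  obtain ⟨C, hC, hpre⟩ :=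
    f.rangeRestrict.exists_preimage_norm_le f.toLinearMap.surjective_rangeRestrict
  refine ⟨C⁻¹, inv_pos.mpr hC, fun y hy => ?_⟩
  obtain ⟨x, hfx, hx⟩ := hpre ⟨y, hy⟩
  refine ⟨x, congrArg Subtype.val hfx, ?_⟩
  rw [inv_mul_le_iff₀ hC]
  exact hx

theorem mul_norm_le_norm_apply_of_mem_orthogonal_ker [InnerProductSpace 𝕜 E]
    [NormedSpace 𝕜 G] {f : E →L[𝕜] G} {c : ℝ} (hc₀ : 0 ≤ c)
    (hc : ∀ y ∈ LinearMap.range (f : E →ₗ[𝕜] G), ∃ x, f x = y ∧ c * ‖x‖ ≤ ‖y‖)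
    {x : E} (hx : x ∈ (LinearMap.ker (f : E →ₗ[𝕜] G))ᗮ) : c * ‖x‖ ≤ ‖f x‖ := by
  obtain ⟨x', hfx', hx'⟩ := hc (f x) (LinearMap.mem_range_self _ x)
  have hsub : x' - x ∈ LinearMap.ker (f : E →ₗ[𝕜] G) := by
    simp [LinearMap.mem_ker, hfx']
  calc c * ‖x‖ ≤ c * ‖x'‖ := by gcongr; exact norm_le_of_mem_orthogonal_of_sub_mem hx hsub
    _ ≤ ‖f x‖ := hx'

theorem ker_add_inf_orthogonal_ker_eq_bot [InnerProductSpace 𝕜 E]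
    [NormedSpace 𝕜 G] {f g : E →L[𝕜] G} {c : ℝ}
    (hc : ∀ y ∈ LinearMap.range (f : E →ₗ[𝕜] G), ∃ x, f x = y ∧ c * ‖x‖ ≤ ‖y‖)
    (hg : ‖g‖ < c) :
    LinearMap.ker ((f + g : E →L[𝕜] G) : E →ₗ[𝕜] G) ⊓ (LinearMap.ker (f : E →ₗ[𝕜] G))ᗮ = ⊥ := by
  refine (Submodule.eq_bot_iff _).mpr fun z ⟨hz, hzK⟩ => norm_le_zero_iff.mp ?_
  have hfz : f z = -g z := eq_neg_of_add_eq_zero_left hz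
  have hbound : c * ‖z‖ ≤ ‖g‖ * ‖z‖ :=
    calc c * ‖z‖ ≤ ‖f z‖ := mul_norm_le_norm_apply_of_mem_orthogonal_ker
          ((norm_nonneg g).trans hg.le) hc hzK
      _ = ‖g z‖ := by rw [hfz, norm_neg]
      _ ≤ ‖g‖ * ‖z‖ := g.le_opNorm z
  exact not_lt.mp fun hpos => hg.not_ge (le_of_mul_le_mul_right hbound hpos)

theorem orthogonal_range_add_inf_range_eq_bot [NormedSpace 𝕜 E]
    [InnerProductSpace 𝕜 G] {f g : E →L[𝕜] G} {c : ℝ}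
    (hc : ∀ y ∈ LinearMap.range (f : E →ₗ[𝕜] G), ∃ x, f x = y ∧ c * ‖x‖ ≤ ‖y‖)
    (hg : ‖g‖ < c) :
    (LinearMap.range ((f + g : E →L[𝕜] G) : E →ₗ[𝕜] G))ᗮ ⊓ LinearMap.range (f : E →ₗ[𝕜] G) = ⊥ := by
  refine (Submodule.eq_bot_iff _).mpr fun z ⟨hz, hzR⟩ => ?_
  obtain ⟨q, rfl, hq⟩ := hc z hzR
  have horth : ⟪(f + g) q, f q⟫_𝕜 = 0 :=
    inner_right_of_mem_orthogonal (LinearMap.mem_range_self _ q) hz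
  have hsq : ‖f q‖ * ‖f q‖ ≤ ‖g‖ * ‖q‖ * ‖f q‖ :=
    calc ‖f q‖ * ‖f q‖ = ‖⟪g q, f q⟫_𝕜‖ := by
          rw [add_apply, inner_add_left, add_eq_zero_iff_eq_neg] at horth
          rw [← norm_neg ⟪g q, f q⟫_𝕜, ← horth, inner_self_eq_norm_sq_to_K]
          simp [sq]
      _ ≤ ‖g q‖ * ‖f q‖ := norm_inner_le_norm _ _
      _ ≤ ‖g‖ * ‖q‖ * ‖f q‖ := by gcongr; exact g.le_opNorm q
  have hle : ‖f q‖ ≤ ‖g‖ * ‖q‖ := by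
    rcases (norm_nonneg (f q)).eq_or_lt with h0 | hpos
    · rw [← h0]; positivity
    · exact le_of_mul_le_mul_right hsq hpos
  have hcq : c * ‖q‖ ≤ ‖g‖ * ‖q‖ := hq.trans hle
  have hq0 : ‖q‖ ≤ 0 := not_lt.mp fun hpos => hg.not_ge (le_of_mul_le_mul_right hcq hpos)
  simp [norm_le_zero_iff.mp hq0]

end ContinuousLinearMap

end

/-- Lemma L03, Hilbert space case: if `F` is Fredholm with closed range, then for
all sufficiently small perturbations `D`, `ker (F+D)` embeds as a closed subspace
into `ker F` and `(Im (F+D))ᗮ` embeds as a closed subspace into `(Im F)ᗮ`; in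
particular the dimensions can only decrease. -/
theorem stmt_10 {H : Type*} [NormedAddCommGroup H] [InnerProductSpace ℂ H] [CompleteSpace H]
    (F : H →L[ℂ] H)
    (hF : IsClosed ((LinearMap.range (F : H →ₗ[ℂ] H) : Submodule ℂ H) : Set H))
    (hker : FiniteDimensional ℂ (LinearMap.ker (F : H →ₗ[ℂ] H)))
    (hcoker : FiniteDimensional ℂ ((LinearMap.range (F : H →ₗ[ℂ] H))ᗮ : Submodule ℂ H)) :
    ∃ ε > (0 : ℝ), ∀ D : H →L[ℂ] H, ‖D‖ < ε →
      (∃ T : (LinearMap.ker ((F + D : H →L[ℂ] H) : H →ₗ[ℂ] H)) →L[ℂ] (LinearMap.ker (F : H →ₗ[ℂ] H)),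
        Function.Injective T ∧ IsClosed (Set.range T)) ∧
      (∃ T : ((LinearMap.range ((F + D : H →L[ℂ] H) : H →ₗ[ℂ] H))ᗮ : Submodule ℂ H) →L[ℂ]
          ((LinearMap.range (F : H →ₗ[ℂ] H))ᗮ : Submodule ℂ H),
        Function.Injective T ∧ IsClosed (Set.range T)) ∧
      Module.finrank ℂ (LinearMap.ker ((F + D : H →L[ℂ] H) : H →ₗ[ℂ] H)) ≤ Module.finrank ℂ (LinearMap.ker (F : H →ₗ[ℂ] H)) ∧
      Module.finrank ℂ ((LinearMap.range ((F + D : H →L[ℂ] H) : H →ₗ[ℂ] H))ᗮ : Submodule ℂ H) ≤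
        Module.finrank ℂ ((LinearMap.range (F : H →ₗ[ℂ] H))ᗮ : Submodule ℂ H) := by
  have : CompleteSpace (LinearMap.range (F : H →ₗ[ℂ] H)) := hF.completeSpace_coe
  obtain ⟨c, hc, hpre⟩ := F.exists_preimage_mul_norm_le_of_isClosed_range hF
  refine ⟨c, hc, fun D hD => ?_⟩
  have hkerD := F.ker_add_inf_orthogonal_ker_eq_bot hpre hD
  have hcokerD : (LinearMap.range ((F + D : H →L[ℂ] H) : H →ₗ[ℂ] H))ᗮ ⊓
      (LinearMap.range (F : H →ₗ[ℂ] H))ᗮᗮ = ⊥ := by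
    rw [orthogonal_orthogonal]
    exact F.orthogonal_range_add_inf_range_eq_bot hpre hD
  exact ⟨exists_injective_isClosed_range_of_inf_orthogonal_eq_bot hkerD,
    exists_injective_isClosed_range_of_inf_orthogonal_eq_bot hcokerD,
    finrank_le_of_inf_orthogonal_eq_bot hkerD, finrank_le_of_inf_orthogonal_eq_bot hcokerD⟩
end

section
/- Let H be a Hilbert space and F a bounded operator on H. If F is not upper semi-Fredholm (i.e. either Im F is not closed or dim ker F = ∞), then there exists a compact operator K on H such that ker(F − K) is infinite-dimensional. Conversely, if F is upper semi-Fredholm, then ker(F − K) is finite-dimensional for every compact operator K. Hence F is upper semi-Fredholm if and only if ker(F − K) is finite-dimensional for all compact K. -/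
/-!
If `F` has closed range, it is bounded below on `(ker F)ᗮ`. On `ker (F - K) ⊓ (ker F)ᗮ` it
agrees with `K`, so there `K` is a compact operator that is bounded below, which forces finite
dimension; since `ker F` is finite-dimensional, so is `ker (F - K)`.

Conversely, `K = 0` gives `dim ker F < ∞`. If the range of `F` is not closed, `F` is not bounded
below on the orthogonal complement of any finite-dimensional `M` (otherwise
`range F = F(Mᗮ) + F(M)` would be closed), so an orthonormal sequence `(xₙ)` with
`‖F xₙ‖ ≤ 2⁻ⁿ` can be chosen inductively. Then `K = ∑ ⟪xₙ, ·⟫ F xₙ` converges in norm to a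
compact operator with `K xₙ = F xₙ`, so `ker (F - K)` contains every `xₙ`.
-/

open Submodule
open scoped InnerProductSpace NNReal

theorem FiniteDimensional.of_isCompactOperator_of_antilipschitz {𝕜 E G : Type*}
    [NontriviallyNormedField 𝕜] [CompleteSpace 𝕜] [NormedAddCommGroup E] [NormedSpace 𝕜 E]
    [CompleteSpace E] [NormedAddCommGroup G] [NormedSpace 𝕜 G] {T : E →L[𝕜] G} {c : ℝ≥0}
    (hT : IsCompactOperator T) (hc : AntilipschitzWith c T) : FiniteDimensional 𝕜 E := by
  obtain ⟨C, hC, hmem⟩ := hT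
  exact .of_isCompactOperator_id
    ⟨T ⁻¹' C, (hc.isClosedEmbedding T.uniformContinuous).isCompact_preimage hC, hmem⟩

section InnerProductSpace

variable {𝕜 E G : Type*} [RCLike 𝕜] [NormedAddCommGroup E] [InnerProductSpace 𝕜 E]
  [NormedAddCommGroup G] [NormedSpace 𝕜 G]

theorem Submodule.finiteDimensional_of_finiteDimensional_inf_orthogonal (U V : Submodule 𝕜 E)
    [FiniteDimensional 𝕜 U] [FiniteDimensional 𝕜 ↥(V ⊓ Uᗮ)] : FiniteDimensional 𝕜 V := by
  refine .of_fg (fg_of_fg_map_of_fg_inf_ker (U.orthogonalProjectionOnto : E →ₗ[𝕜] U)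
    .of_finite ?_)
  rw [ker_orthogonalProjectionOnto]
  exact .of_finite

theorem Orthonormal.exists_isCompactOperator_apply_eq [CompleteSpace G] {ι : Type*} {x : ι → E}
    (hx : Orthonormal 𝕜 x) {y : ι → G} (hy : Summable fun i => ‖y i‖) :
    ∃ K : E →L[𝕜] G, IsCompactOperator K ∧ ∀ i, K (x i) = y i := by
  classical
  set T : ι → E →L[𝕜] G := fun i => (innerSL 𝕜 (x i)).smulRight (y i)
  have hT : Summable T := .of_norm_bounded hy fun i => by
    simp [T, ContinuousLinearMap.norm_smulRight_apply, hx.1 i]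
  refine ⟨∑' i, T i, isCompactOperator_of_tendsto hT.hasSum (.of_forall fun s => ?_), fun j => ?_⟩
  · exact (compactOperator (RingHom.id 𝕜) E G).sum_mem fun i _ =>
      (isCompactOperator_of_locallyCompactSpace_rng (.toSpanSingleton 𝕜 (y i))).comp_clm
        (innerSL 𝕜 (x i))
  · refine (hT.hasSum.mapL (.apply 𝕜 G (x j))).unique ?_
    convert hasSum_ite_eq j (y j) using 2 with i
    by_cases h : i = j <;> simp [T, orthonormal_iff_ite.mp hx, h, hx.1 j]

variable [CompleteSpace E]

namespace ContinuousLinearMap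

theorem exists_antilipschitz_comp_orthogonal_ker [CompleteSpace G] (F : E →L[𝕜] G)
    (hF : IsClosed (LinearMap.range (F : E →ₗ[𝕜] G) : Set G)) :
    ∃ c, AntilipschitzWith c (F ∘L (LinearMap.ker (F : E →ₗ[𝕜] G))ᗮ.subtypeL) := by
  set N := (LinearMap.ker (F : E →ₗ[𝕜] G))ᗮ
  refine (F ∘L N.subtypeL).antilipschitz_of_injective_of_isClosed_range (fun a b hab => ?_) ?_
  · have hker : (a - b : E) ∈ LinearMap.ker (F : E →ₗ[𝕜] G) := by
      simpa [sub_eq_zero] using hab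
    exact Subtype.ext <| sub_eq_zero.mp <|
      (orthogonal_disjoint _).le_bot ⟨hker, N.sub_mem a.2 b.2⟩
  · convert hF using 1
    ext y
    constructor
    · rintro ⟨v, rfl⟩
      exact ⟨v, rfl⟩
    · rintro ⟨x, rfl⟩
      obtain ⟨k, hk, n, hn, rfl⟩ :=
        (LinearMap.ker (F : E →ₗ[𝕜] G)).exists_add_mem_mem_orthogonal x
      have hFk : F k = 0 := hk
      exact ⟨⟨n, hn⟩, by simp [hFk]⟩

theorem finiteDimensional_ker_sub_of_isCompactOperator [CompleteSpace G] (F K : E →L[𝕜] G)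
    (hF : IsClosed (LinearMap.range (F : E →ₗ[𝕜] G) : Set G))
    [FiniteDimensional 𝕜 (LinearMap.ker (F : E →ₗ[𝕜] G))] (hK : IsCompactOperator K) :
    FiniteDimensional 𝕜 (LinearMap.ker ((F - K : E →L[𝕜] G) : E →ₗ[𝕜] G)) := by
  set W := LinearMap.ker ((F - K : E →L[𝕜] G) : E →ₗ[𝕜] G) ⊓ (LinearMap.ker (F : E →ₗ[𝕜] G))ᗮ
  have : CompleteSpace W :=
    ((F - K).isClosed_ker.inter (isClosed_orthogonal _)).completeSpace_coe
  obtain ⟨c, hc⟩ := F.exists_antilipschitz_comp_orthogonal_ker hF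
  have hKW : AntilipschitzWith c (K ∘L W.subtypeL) := by
    refine AddMonoidHomClass.antilipschitz_of_bound _ fun w => ?_
    have hFK : F w = K w := sub_eq_zero.mp w.2.1
    simpa [hFK] using ZeroHomClass.bound_of_antilipschitz _ hc ⟨w, w.2.2⟩
  have : FiniteDimensional 𝕜 W := .of_isCompactOperator_of_antilipschitz (hK.comp_clm _) hKW
  exact finiteDimensional_of_finiteDimensional_inf_orthogonal (LinearMap.ker (F : E →ₗ[𝕜] G)) _

theorem isClosed_range_of_antilipschitz_comp_orthogonal (F : E →L[𝕜] G)
    (M : Submodule 𝕜 E) [FiniteDimensional 𝕜 M] {c : ℝ≥0}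
    (hc : AntilipschitzWith c (F ∘L Mᗮ.subtypeL)) :
    IsClosed (LinearMap.range (F : E →ₗ[𝕜] G) : Set G) := by
  have hrange : LinearMap.range (F : E →ₗ[𝕜] G) =
      LinearMap.range ((F ∘L Mᗮ.subtypeL : Mᗮ →L[𝕜] G) : Mᗮ →ₗ[𝕜] G) ⊔ M.map (F : E →ₗ[𝕜] G) := by
    rw [LinearMap.range_eq_map, ← sup_orthogonal_of_hasOrthogonalProjection (K := M),
      Submodule.map_sup, sup_comm]
    simp [LinearMap.range_comp]
  rw [hrange]
  exact isClosed_sup_finiteDimensional _ _ (hc.isClosed_range (F ∘L Mᗮ.subtypeL).uniformContinuous)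

theorem exists_norm_eq_one_mem_orthogonal_norm_apply_lt (F : E →L[𝕜] G)
    (hF : ¬ IsClosed (LinearMap.range (F : E →ₗ[𝕜] G) : Set G))
    (M : Submodule 𝕜 E) [FiniteDimensional 𝕜 M] {ε : ℝ} (hε : 0 < ε) :
    ∃ y ∈ Mᗮ, ‖y‖ = 1 ∧ ‖F y‖ < ε := by
  have hnot : ¬ ∃ c, AntilipschitzWith c (F ∘L Mᗮ.subtypeL) := fun ⟨c, hc⟩ =>
    hF (F.isClosed_range_of_antilipschitz_comp_orthogonal M hc)
  rw [antilipschitzWith_iff_exists_mul_le_norm] at hnot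
  push Not at hnot
  obtain ⟨⟨x, hxM⟩, hx⟩ := hnot ε hε
  have hx0 : x ≠ 0 := by rintro rfl; simp at hx
  refine ⟨(‖x‖⁻¹ : 𝕜) • x, smul_mem _ _ hxM, norm_smul_inv_norm hx0, ?_⟩
  rw [map_smul, norm_smul, norm_inv, RCLike.norm_ofReal, abs_norm]
  exact (inv_mul_lt_iff₀ (norm_pos_iff.mpr hx0)).mpr (by simpa [mul_comm] using hx)

theorem exists_orthonormal_norm_apply_le_of_not_isClosed_range (F : E →L[𝕜] G)
    (hF : ¬ IsClosed (LinearMap.range (F : E →ₗ[𝕜] G) : Set G)) :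
    ∃ x : ℕ → E, Orthonormal 𝕜 x ∧ ∀ n, ‖F (x n)‖ ≤ 2⁻¹ ^ n := by
  classical
  -- Each vector is chosen together with an exponent `k`, larger than all earlier ones, for
  -- which `‖F x‖ < 2⁻¹ ^ k`.
  obtain ⟨f, hP, hr⟩ := exists_seq_of_forall_finset_exists
    (fun p : ℕ × E => ‖p.2‖ = 1 ∧ ‖F p.2‖ < 2⁻¹ ^ p.1)
    (fun p q => p.1 < q.1 ∧ ⟪p.2, q.2⟫_𝕜 = 0) fun s _ => by
      obtain ⟨y, hyM, hy1, hyF⟩ := F.exists_norm_eq_one_mem_orthogonal_norm_apply_lt hF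
        (span 𝕜 (s.image Prod.snd : Set E)) (ε := 2⁻¹ ^ (s.sup Prod.fst + 1)) (by positivity)
      refine ⟨(s.sup Prod.fst + 1, y), ⟨hy1, hyF⟩, fun p hp =>
        ⟨Nat.lt_succ_of_le (Finset.le_sup hp), ?_⟩⟩
      exact (mem_orthogonal _ _).mp hyM p.2
        (subset_span (Finset.mem_coe.mpr (Finset.mem_image_of_mem _ hp)))
  have hmono : StrictMono fun n => (f n).1 :=
    strictMono_nat_of_lt_succ fun n => (hr n (n + 1) n.lt_succ_self).1
  refine ⟨fun n => (f n).2, ⟨fun n => (hP n).1, fun m n hmn => ?_⟩, fun n => ?_⟩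
  · rcases hmn.lt_or_gt with h | h
    · exact (hr m n h).2
    · exact inner_eq_zero_symm.mp (hr n m h).2
  · exact (hP n).2.le.trans (pow_le_pow_of_le_one (by norm_num) (by norm_num) hmono.le_apply)

theorem exists_isCompactOperator_not_finiteDimensional_ker_sub [CompleteSpace G] (F : E →L[𝕜] G)
    (hF : ¬ IsClosed (LinearMap.range (F : E →ₗ[𝕜] G) : Set G)) :
    ∃ K : E →L[𝕜] G, IsCompactOperator K ∧
      ¬ FiniteDimensional 𝕜 (LinearMap.ker ((F - K : E →L[𝕜] G) : E →ₗ[𝕜] G)) := by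
  obtain ⟨x, hx, hFx⟩ := F.exists_orthonormal_norm_apply_le_of_not_isClosed_range hF
  obtain ⟨K, hK, hKx⟩ := hx.exists_isCompactOperator_apply_eq (y := fun n => F (x n))
    (.of_nonneg_of_le (fun _ => norm_nonneg _) hFx
      (summable_geometric_of_lt_one (by norm_num) (by norm_num)))
  have hmem (n : ℕ) : x n ∈ LinearMap.ker ((F - K : E →L[𝕜] G) : E →ₗ[𝕜] G) := by
    simp [hKx n]
  refine ⟨K, hK, fun _ => Module.Finite.not_linearIndependent_of_infinite (R := 𝕜)
    (fun n => (⟨x n, hmem n⟩ : LinearMap.ker ((F - K : E →L[𝕜] G) : E →ₗ[𝕜] G))) ?_⟩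
  exact .of_comp (LinearMap.ker _).subtype hx.linearIndependent

end ContinuousLinearMap

end InnerProductSpace

/-- Schechter–Lebow characterization (T01), Hilbert space case: `F` is upper
semi-Fredholm (closed range and finite-dimensional kernel) iff `ker (F - K)` is
finite-dimensional for every compact operator `K`. -/
theorem stmt_12 {H : Type*} [NormedAddCommGroup H] [InnerProductSpace ℂ H] [CompleteSpace H]
    (F : H →L[ℂ] H) :
    (IsClosed ((LinearMap.range (F : H →ₗ[ℂ] H) : Submodule ℂ H) : Set H) ∧
        FiniteDimensional ℂ (LinearMap.ker (F : H →ₗ[ℂ] H))) ↔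
      ∀ K : H →L[ℂ] H, IsCompactOperator K →
        FiniteDimensional ℂ (LinearMap.ker ((F - K : H →L[ℂ] H) : H →ₗ[ℂ] H)) := by
  refine ⟨fun ⟨hF, _⟩ K hK => F.finiteDimensional_ker_sub_of_isCompactOperator K hF hK,
    fun h => ⟨?_, sub_zero F ▸ h 0 isCompactOperator_zero⟩⟩
  by_contra hF
  obtain ⟨K, hK, hinf⟩ := F.exists_isCompactOperator_not_finiteDimensional_ker_sub hF
  exact hinf (h K hK)
end

section
/- Let H be a Hilbert space and F, G bounded operators on H with closed ranges such that Im(G∘F) is closed. Then, with X a closed subspace satisfying Im G = Im(G∘F) ⊕ X and M' a closed subspace satisfying ker G = (ker G ∩ Im F) ⊕ M', the orthogonal complement (Im F)^⊥ is isomorphic (via a bounded linear isomorphism) to X ⊕ M', and (Im(G∘F))^⊥ is isomorphic to X ⊕ (Im G)^⊥. -/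
/-!
For a closed subspace `p` of a Hilbert space `H`, the orthogonal projection identifies `pᗮ` with
`H ⧸ p`, so `pᗮ ≃L W` as soon as some bounded `f : W → H` with `W` complete is bijective modulo
`p`. For `p = Im (G ∘ F)` take `(x, y) ↦ x + y` on `X × (Im G)ᗮ`, which works because
`H = Im G ⊕ (Im G)ᗮ = Im (G ∘ F) ⊕ X ⊕ (Im G)ᗮ`. For `p = Im F` take `(x, m) ↦ A x + m` on
`X × M'`, where `A` is a bounded section of `G` over `X`: it exists because `G` maps `(ker G)ᗮ`
bijectively onto its closed range.
-/

section

open Submodule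

variable {𝕜 H K W : Type*} [RCLike 𝕜]
  [NormedAddCommGroup H] [InnerProductSpace 𝕜 H] [CompleteSpace H]

theorem Submodule.nonempty_orthogonal_equiv_of_bijective_mod
    [NormedAddCommGroup W] [NormedSpace 𝕜 W] [CompleteSpace W]
    {p : Submodule 𝕜 H} (hp : IsClosed (p : Set H)) (f : W →L[𝕜] H)
    (hinj : ∀ w, f w ∈ p → w = 0) (hsurj : ∀ v, ∃ w, v - f w ∈ p) :
    Nonempty (pᗮ ≃L[𝕜] W) := by
  have : CompleteSpace p := hp.completeSpace_coe
  let T := pᗮ.orthogonalProjectionOnto ∘L f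
  have hker : T.ker = ⊥ := by
    refine LinearMap.ker_eq_bot'.2 fun w hw ↦ hinj w ?_
    simpa [T, orthogonal_orthogonal] using hw
  have hrange : T.range = ⊤ := by
    refine LinearMap.range_eq_top.2 fun v ↦ ?_
    obtain ⟨w, hw⟩ := hsurj v
    refine ⟨w, ?_⟩
    have h0 : pᗮ.orthogonalProjectionOnto (v - f w) = 0 := by
      rwa [orthogonalProjectionOnto_eq_zero_iff, orthogonal_orthogonal]
    rw [map_sub, orthogonalProjectionOnto_mem_subspace_eq_self, sub_eq_zero] at h0
    exact h0.symm
  exact ⟨(ContinuousLinearEquiv.ofBijective T hker hrange).symm⟩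

theorem ContinuousLinearMap.exists_rightInverse_on_of_isClosed_range
    [NormedAddCommGroup K] [NormedSpace 𝕜 K] [CompleteSpace K]
    (G : H →L[𝕜] K) (hG : IsClosed (G.range : Set K)) {X : Submodule 𝕜 K} (hX : X ≤ G.range) :
    ∃ A : X →L[𝕜] H, ∀ x : X, G (A x) = x := by
  let G' := G ∘L G.kerᗮ.subtypeL
  have hinj : Function.Injective G' := by
    refine (injective_iff_map_eq_zero G').2 fun k hk ↦ Subtype.ext ?_
    have : (k : H) ∈ G.ker ⊓ G.kerᗮ := ⟨hk, k.2⟩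
    rwa [inf_orthogonal_eq_bot] at this
  have hrange : G'.range = G.range := by
    refine le_antisymm (LinearMap.range_comp_le_range _ _) ?_
    rintro _ ⟨h, rfl⟩
    obtain ⟨n, hn, k, hk, rfl⟩ := exists_add_mem_mem_orthogonal (K := G.ker) h
    exact ⟨⟨k, hk⟩, by simp [G', show G n = 0 from hn]⟩
  let e := G'.equivRange hinj (by rwa [← hrange] at hG)
  refine ⟨G.kerᗮ.subtypeL ∘L e.symm.toContinuousLinearMap ∘L
    X.subtypeL.codRestrict G'.range fun x ↦ hrange ▸ hX x.2, fun x ↦ ?_⟩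
  exact congrArg Subtype.val (e.apply_symm_apply ⟨x, hrange ▸ hX x.2⟩)

theorem Submodule.nonempty_orthogonal_equiv_prod_orthogonal_of_sup_eq {p X q : Submodule 𝕜 H}
    (hp : IsClosed (p : Set H)) (hX : IsClosed (X : Set H)) (hq : IsClosed (q : Set H))
    (hpX : Disjoint p X) (hsup : p ⊔ X = q) :
    Nonempty (pᗮ ≃L[𝕜] X × qᗮ) := by
  have : CompleteSpace X := hX.completeSpace_coe
  have : CompleteSpace q := hq.completeSpace_coe
  refine p.nonempty_orthogonal_equiv_of_bijective_mod hp
    (X.subtypeL ∘L .fst 𝕜 X qᗮ + qᗮ.subtypeL ∘L .snd 𝕜 X qᗮ) ?_ ?_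
  · rintro ⟨x, y⟩ hxy
    change (x : H) + y ∈ p at hxy
    have hy : (y : H) = 0 := by
      have hyq : (y : H) ∈ q := by
        have hpq : p ≤ q := hsup ▸ le_sup_left
        have hXq : X ≤ q := hsup ▸ le_sup_right
        simpa using q.sub_mem (hpq hxy) (hXq x.2)
      have : (y : H) ∈ q ⊓ qᗮ := ⟨hyq, y.2⟩
      rwa [inf_orthogonal_eq_bot] at this
    have hx : (x : H) = 0 := by
      have : (x : H) ∈ p ⊓ X := ⟨by simpa [hy] using hxy, x.2⟩
      rwa [hpX.eq_bot] at this
    simp [Prod.ext_iff, Subtype.ext_iff, hx, hy]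
  · intro v
    obtain ⟨u, hu, y, hy, rfl⟩ := exists_add_mem_mem_orthogonal (K := q) v
    obtain ⟨w, hw, x, hx, rfl⟩ := mem_sup.1 (hsup ▸ hu)
    exact ⟨(⟨x, hx⟩, ⟨y, hy⟩), by simpa using hw⟩

theorem ContinuousLinearMap.nonempty_orthogonal_equiv_prod_of_map_sup_eq
    [NormedAddCommGroup K] [NormedSpace 𝕜 K] [CompleteSpace K]
    (G : H →L[𝕜] K) {V : Submodule 𝕜 H} {X : Submodule 𝕜 K} {M : Submodule 𝕜 H}
    (hG : IsClosed (G.range : Set K)) (hV : IsClosed (V : Set H))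
    (hX : IsClosed (X : Set K)) (hM : IsClosed (M : Set H))
    (hVX : Disjoint (V.map (G : H →ₗ[𝕜] K)) X) (hVX_sup : V.map (G : H →ₗ[𝕜] K) ⊔ X = G.range)
    (hVM : Disjoint (G.ker ⊓ V) M) (hVM_sup : G.ker ⊓ V ⊔ M = G.ker) :
    Nonempty (Vᗮ ≃L[𝕜] X × M) := by
  have : CompleteSpace X := hX.completeSpace_coe
  have : CompleteSpace M := hM.completeSpace_coe
  obtain ⟨A, hA⟩ := G.exists_rightInverse_on_of_isClosed_range hG (hVX_sup ▸ le_sup_right)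
  have hMker : M ≤ G.ker := hVM_sup ▸ le_sup_right
  refine V.nonempty_orthogonal_equiv_of_bijective_mod hV
    (A ∘L .fst 𝕜 X M + M.subtypeL ∘L .snd 𝕜 X M) ?_ ?_
  · rintro ⟨x, m⟩ hxm
    have hGm : G m = 0 := hMker m.2
    have hx : (x : K) = 0 := by
      have : (x : K) ∈ V.map (G : H →ₗ[𝕜] K) ⊓ X :=
        ⟨⟨_, hxm, by simp [hA, hGm]⟩, x.2⟩
      rwa [hVX.eq_bot] at this
    have hm : (m : H) = 0 := by
      have hAx : A x = 0 := by rw [show x = 0 from Subtype.ext hx, map_zero]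
      have : (m : H) ∈ G.ker ⊓ V ⊓ M := ⟨⟨hGm, by simpa [hAx] using hxm⟩, m.2⟩
      rwa [hVM.eq_bot] at this
    simp [Prod.ext_iff, Subtype.ext_iff, hx, hm]
  · intro h
    obtain ⟨_, ⟨v, hv, rfl⟩, x, hx, hGh⟩ :=
      mem_sup.1 (hVX_sup ▸ LinearMap.mem_range_self (G : H →ₗ[𝕜] K) h)
    have hker : h - v - A ⟨x, hx⟩ ∈ G.ker := by
      simp only [LinearMap.mem_ker, ContinuousLinearMap.coe_coe] at hGh ⊢
      rw [map_sub, map_sub, hA, ← hGh]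
      abel
    obtain ⟨k, hk, m, hm, hkm⟩ := mem_sup.1 (hVM_sup ▸ hker)
    refine ⟨(⟨x, hx⟩, ⟨m, hm⟩), ?_⟩
    have hh : h = v + A ⟨x, hx⟩ + (k + m) := by rw [hkm]; abel
    change h - (A ⟨x, hx⟩ + m) ∈ V
    convert V.add_mem hv hk.2 using 1
    rw [hh]
    abel

end

/-- Structural content of Proposition P03, Hilbert space case: for `F, G` with
closed ranges and `Im (G∘F)` closed, given complements `X` of `Im (G∘F)` in
`Im G` and `M'` of `ker G ∩ Im F` in `ker G`, one has `(Im F)ᗮ ≅ X ⊕ M'` and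
`(Im (G∘F))ᗮ ≅ X ⊕ (Im G)ᗮ` via continuous linear equivalences. -/
theorem stmt_17 {H : Type*} [NormedAddCommGroup H] [InnerProductSpace ℂ H] [CompleteSpace H]
    (F G : H →L[ℂ] H)
    (hF : IsClosed ((LinearMap.range (F : H →ₗ[ℂ] H) : Submodule ℂ H) : Set H))
    (hG : IsClosed ((LinearMap.range (G : H →ₗ[ℂ] H) : Submodule ℂ H) : Set H))
    (hGF : IsClosed ((LinearMap.range ((G.comp F : H →L[ℂ] H) : H →ₗ[ℂ] H) : Submodule ℂ H) : Set H))
    (X M' : Submodule ℂ H)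
    (hX : IsClosed (X : Set H)) (hM' : IsClosed (M' : Set H))
    (hX1 : Disjoint (LinearMap.range ((G.comp F : H →L[ℂ] H) : H →ₗ[ℂ] H)) X)
    (hX2 : LinearMap.range ((G.comp F : H →L[ℂ] H) : H →ₗ[ℂ] H) ⊔ X = LinearMap.range (G : H →ₗ[ℂ] H))
    (hM1 : Disjoint (LinearMap.ker (G : H →ₗ[ℂ] H) ⊓ LinearMap.range (F : H →ₗ[ℂ] H)) M')
    (hM2 : (LinearMap.ker (G : H →ₗ[ℂ] H) ⊓ LinearMap.range (F : H →ₗ[ℂ] H)) ⊔ M' = LinearMap.ker (G : H →ₗ[ℂ] H)) :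
    Nonempty (((LinearMap.range (F : H →ₗ[ℂ] H))ᗮ : Submodule ℂ H) ≃L[ℂ] (X × M')) ∧
    Nonempty (((LinearMap.range ((G.comp F : H →L[ℂ] H) : H →ₗ[ℂ] H))ᗮ : Submodule ℂ H) ≃L[ℂ]
      (X × ((LinearMap.range (G : H →ₗ[ℂ] H))ᗮ : Submodule ℂ H))) := by
  have hGF_eq : ((G.comp F : H →L[ℂ] H) : H →ₗ[ℂ] H).range =
      (F : H →ₗ[ℂ] H).range.map (G : H →ₗ[ℂ] H) := by
    rw [← LinearMap.range_comp]; rfl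
  rw [hGF_eq] at hGF hX1 hX2 ⊢
  exact ⟨G.nonempty_orthogonal_equiv_prod_of_map_sup_eq hG hF hX hM' hX1 hX2 hM1 hM2,
    Submodule.nonempty_orthogonal_equiv_prod_orthogonal_of_sup_eq hGF hX hG hX1 hX2⟩
end
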